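/- Let c > 0, f₁ > 0, s₁ < s₂, and set q = f₁·(exp((s₂ - s₁)/c) - 1) and L = 2√f₁·(exp((s₂ - s₁)/(2c)) - 1). Then q = (L/4)·(L + 4√f₁). -/
import Mathlib

theorem stmt_5 (c f₁ s₁ s₂ : ℝ) (hc : 0 < c) (hf : 0 < f₁) (hs : s₁ < s₂)
    (q L : ℝ)
    (hq : q = f₁ * (Real.exp ((s₂ - s₁) / c) - 1))
    (hL : L = 2 * Real.sqrt f₁ * (Real.exp ((s₂ - s₁) / (2 * c)) - 1)) :
    q = (L / 4) * (L + 4 * Real.sqrt f₁) := by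
  have hE : Real.exp ((s₂ - s₁) / c) = Real.exp ((s₂ - s₁) / (2 * c)) ^ 2 := by
    rw [← Real.exp_nat_mul]
    congr 1
    field_simp
    ring
  have hs2 : Real.sqrt f₁ ^ 2 = f₁ := Real.sq_sqrt hf.le
  subst hq hL
  rw [hE]
  nlinarith [hs2]
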